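/- Let X be a nonempty finite type and p : ℝ → X → ℝ a parametrized family of probability mass functions (p(θ, x) > 0, ∑_{x∈X} p(θ, x) = 1, and θ ↦ p(θ, x) differentiable for each x). Let g : X → ℝ and let 2 ≤ k ≤ n. Define maxg@k(θ) = ∑_{y : Fin k → X} (∏_{i} p(θ, yᵢ)) · max_{1≤i≤k} g(yᵢ). For a tuple x : Fin n → X, define s_i^{loo−1}(x) = (1/C(n,k)) · ∑_{I ⊆ {1,...,n}, |I| = k, i ∈ I} ( max_{j∈I} g(x_j) − max_{b∈I∖{i}} g(x_b) ). Then for every θ: ∑_{x : Fin n → X} (∏_{i} p(θ, xᵢ)) · ∑_{i=1}^{n} s_i^{loo−1}(x) · (d/dθ p(θ, xᵢ))/p(θ, xᵢ) = d/dθ maxg@k(θ). -/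

import Mathlib

/-!
Write `E_θ` for the expectation under the product distribution of the coordinates, each drawn
from `p θ`, and `s_i x = ∂_θ p θ (x i) / p θ (x i)` for the score of coordinate `i`. Differentiating
the product of the weights gives `d/dθ E_θ F = ∑ i, E_θ (F · s_i)`, and `E_θ (B · s_i) = 0` whenever
`B` does not depend on `x i`, because `∑ v, ∂_θ p θ v = 0`. After exchanging the sums over `i` and
`I`, each `k`-subset `I` contributes `∑ i ∈ I, E_θ ((max_I - max_{I∖i}) · s_i)`: the baselines
`max_{I∖i}` drop out, the scores of the coordinates outside `I` can be added for free, and what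
remains is `d/dθ E_θ max_I`. As `max_I` only sees the `k` independent coordinates in `I`,
`E_θ max_I = maxg@k(θ)`, and averaging over the `C(n, k)` subsets gives the claim.
-/

/-- The maximum of `g` over a finite index set `I` (equal to `max_{i ∈ I} g i`
whenever `I` is nonempty). -/
noncomputable def finsetMax {α : Type*} (I : Finset α) (g : α → ℝ) : ℝ :=
  WithBot.unbotD 0 (I.sup fun a => ((g a : ℝ) : WithBot ℝ))

open Finset

lemma finsetMax_congr {α : Type*} {I : Finset α} {f f' : α → ℝ} (h : ∀ a ∈ I, f a = f' a) :
    finsetMax I f = finsetMax I f' := by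
  unfold finsetMax
  rw [Finset.sup_congr rfl fun a ha => congrArg _ (h a ha)]

lemma finsetMax_map {α β : Type*} (s : Finset α) (e : α ↪ β) (f : β → ℝ) :
    finsetMax (s.map e) f = finsetMax s (f ∘ e) := by
  unfold finsetMax
  rw [Finset.sup_map]
  rfl

lemma dependsOn_finsetMax {ι X : Type*} (g : X → ℝ) (I : Finset ι) :
    DependsOn (fun x : ι → X => finsetMax I fun j => g (x j)) I :=
  fun _ _ h => finsetMax_congr fun j hj => congrArg g (h j hj)

lemma sum_eq_zero_of_hasDerivAt_of_sum_eq_one {X : Type*} [Fintype X] {p : ℝ → X → ℝ}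
    {p' : X → ℝ} {θ : ℝ} (hsum : ∀ t, ∑ v, p t v = 1)
    (hp : ∀ v, HasDerivAt (fun t => p t v) (p' v) θ) :
    ∑ v, p' v = 0 := by
  have h := HasDerivAt.fun_sum (u := univ) fun v _ => hp v
  simp only [hsum] at h
  exact h.unique (hasDerivAt_const θ 1)

section PiExpect

variable {ι κ X : Type*} [Fintype ι] [DecidableEq ι] [Fintype κ] [DecidableEq κ] [Fintype X]

noncomputable def piExpect (q : X → ℝ) (F : (ι → X) → ℝ) : ℝ :=
  ∑ x : ι → X, (∏ a, q (x a)) * F x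

lemma sum_prod_mul_comp_domRestrict (s : Set ι) [DecidablePred (· ∈ s)] (r : ι → X → ℝ)
    (G : (s → X) → ℝ) :
    ∑ x : ι → X, (∏ a, r a (x a)) * G (s.domRestrict x) =
      (∏ a : ↥sᶜ, ∑ v, r a v) * ∑ z : s → X, (∏ a : s, r a (z a)) * G z := by
  rw [← (Equiv.piEquivPiSubtypeProd (· ∈ s) fun _ => X).symm.sum_comp, Fintype.sum_prod_type,
    Fintype.prod_sum, Finset.mul_sum]
  refine Finset.sum_congr rfl fun z _ => ?_
  rw [Finset.sum_mul]
  refine Finset.sum_congr rfl fun w _ => ?_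
  rw [← Fintype.prod_subtype_mul_prod_subtype (· ∈ s)]
  simp only [Set.domRestrict_def, Equiv.piEquivPiSubtypeProd_symm_apply]
  simp [Subtype.prop, show ∀ a : ↥sᶜ, a.1 ∉ s from Subtype.prop]
  -- not `ring`: the argument of `G` is now a lambda over `{a // a ∈ s}` rather than `↥s`
  exact (mul_right_comm (G := ℝ) _ _ _).trans (mul_comm _ _)

lemma piExpect_comp_embedding {q : X → ℝ} (hq : ∑ v, q v = 1) (e : κ ↪ ι) (G : (κ → X) → ℝ) :
    piExpect q (fun x : ι → X => G fun b => x (e b)) = piExpect q G := by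
  classical
  have h := sum_prod_mul_comp_domRestrict (Set.range e) (fun _ => q)
    (fun z => G fun b => z ⟨e b, b, rfl⟩)
  simp only [hq, prod_const_one, one_mul] at h
  unfold piExpect
  refine h.trans ?_
  -- `congr!` identifies the two `Fintype` instances on `Set.range e` that meet here.
  convert Fintype.sum_equiv (Equiv.arrowCongr (Equiv.ofInjective e e.injective).symm (Equiv.refl X))
    (fun z => (∏ a, q (z a)) * G fun b => z ⟨e b, b, rfl⟩) (fun y => (∏ b, q (y b)) * G y)
    (fun z => ?_) using 1
  · congr!
  · congr 1
    exact (Equiv.prod_comp (Equiv.ofInjective e e.injective) fun a => q (z a)).symm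

lemma piExpect_mul_score_eq_zero {q q' : X → ℝ} (hq : ∀ v, q v ≠ 0) (hq' : ∑ v, q' v = 0)
    (i : ι) {F : (ι → X) → ℝ} (hF : DependsOn F {i}ᶜ) :
    piExpect q (fun x => F x * (q' (x i) / q (x i))) = 0 := by
  classical
  obtain ⟨G, rfl⟩ := dependsOn_iff_exists_comp.1 hF
  let r : ι → X → ℝ := Function.update (fun _ => q) i q'
  have hr (x : ι → X) : ∏ a, r a (x a) = q' (x i) * ∏ a ∈ univ.erase i, q (x a) := by
    rw [← mul_prod_erase univ _ (mem_univ i)]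
    simp only [r, Function.update_self]
    congr 1
    exact prod_congr rfl fun a ha => by rw [Function.update_of_ne (ne_of_mem_erase ha)]
  have hmass : ∏ a : ↥({i}ᶜ : Set ι)ᶜ, ∑ v, r a v = 0 :=
    prod_eq_zero (i := ⟨i, by simp⟩) (mem_univ _) (by simpa [r] using hq')
  have h := sum_prod_mul_comp_domRestrict {i}ᶜ r G
  rw [hmass, zero_mul] at h
  rw [← h]
  refine Fintype.sum_congr _ _ fun x => ?_
  dsimp only [Function.comp_apply]
  rw [hr, ← mul_prod_erase univ _ (mem_univ i)]
  field_simp [hq (x i)]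

lemma hasDerivAt_piExpect {p : ℝ → X → ℝ} {p' : X → ℝ} {θ : ℝ}
    (hp : ∀ v, HasDerivAt (fun t => p t v) (p' v) θ) (hpθ : ∀ v, p θ v ≠ 0)
    (F : (ι → X) → ℝ) :
    HasDerivAt (fun t => piExpect (p t) F)
      (∑ i, piExpect (p θ) fun x => F x * (p' (x i) / p θ (x i))) θ := by
  unfold piExpect
  rw [Finset.sum_comm]
  refine HasDerivAt.fun_sum fun x _ => ?_
  refine ((HasDerivAt.fun_finsetProd fun a _ => hp (x a)).mul_const (F x)).congr_deriv ?_
  rw [Finset.sum_mul]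
  refine sum_congr rfl fun i _ => ?_
  rw [← mul_prod_erase univ _ (mem_univ i), smul_eq_mul]
  field_simp [hpθ (x i)]

lemma hasDerivAt_piExpect_of_dependsOn {p : ℝ → X → ℝ} {p' : X → ℝ} {θ : ℝ}
    (hp : ∀ v, HasDerivAt (fun t => p t v) (p' v) θ) (hpθ : ∀ v, p θ v ≠ 0)
    (hp' : ∑ v, p' v = 0) {F : (ι → X) → ℝ} {I : Finset ι} (hF : DependsOn F I) :
    HasDerivAt (fun t => piExpect (p t) F)
      (∑ i ∈ I, piExpect (p θ) fun x => F x * (p' (x i) / p θ (x i))) θ :=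
  (hasDerivAt_piExpect hp hpθ F).congr_deriv (sum_subset (subset_univ I) fun i _ hi =>
    piExpect_mul_score_eq_zero hpθ hp' i (hF.mono fun _ hj => ne_of_mem_of_not_mem hj hi)).symm

lemma piExpect_sub_mul_score {q q' : X → ℝ} (hq : ∀ v, q v ≠ 0) (hq' : ∑ v, q' v = 0)
    (i : ι) (F : (ι → X) → ℝ) {B : (ι → X) → ℝ} (hB : DependsOn B {i}ᶜ) :
    piExpect q (fun x => (F x - B x) * (q' (x i) / q (x i))) =
      piExpect q (fun x => F x * (q' (x i) / q (x i))) := by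
  have hB0 := piExpect_mul_score_eq_zero hq hq' i hB
  unfold piExpect at hB0 ⊢
  rw [← sub_zero (∑ x : ι → X, _ * (F x * _)), ← hB0, ← sum_sub_distrib]
  exact sum_congr rfl fun x _ => by ring

lemma piExpect_sum_mul_sum_filter_mem (q : X → ℝ) (𝓟 : Finset (Finset ι)) (c : ℝ)
    (Δ : (ι → X) → Finset ι → ι → ℝ) (s : ι → (ι → X) → ℝ) :
    piExpect q (fun x => ∑ i, (c * ∑ I ∈ 𝓟.filter (fun I => i ∈ I), Δ x I i) * s i x) =
      c * ∑ I ∈ 𝓟, ∑ i ∈ I, piExpect q fun x => Δ x I i * s i x := by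
  simp only [piExpect, Finset.mul_sum, Finset.sum_mul]
  calc _ = ∑ x : ι → X, ∑ I ∈ 𝓟, ∑ i ∈ I, c * ((∏ a, q (x a)) * (Δ x I i * s i x)) := by
        refine sum_congr rfl fun x _ => ?_
        rw [Finset.sum_comm' (t' := 𝓟) (s' := fun I => I)]
        · exact sum_congr rfl fun I _ => sum_congr rfl fun i _ => by ring
        · intro i I
          simp only [mem_univ, mem_filter, true_and]
          tauto
    _ = _ := by
        rw [Finset.sum_comm]
        exact sum_congr rfl fun I _ => Finset.sum_comm

lemma piExpect_finsetMax_of_card_eq {q : X → ℝ} (hq : ∑ v, q v = 1) (g : X → ℝ) {k : ℕ}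
    (I : Finset ι) (hI : I.card = k) :
    piExpect q (fun x : ι → X => finsetMax I fun j => g (x j)) =
      piExpect q fun y : Fin k → X => finsetMax univ fun b => g (y b) := by
  let e : Fin k ↪ ι := (I.equivFinOfCardEq hI).symm.toEmbedding.trans (.subtype _)
  have he : univ.map e = I := by
    rw [← map_map, univ_map_equiv_to_embedding, univ_eq_attach, attach_map_val]
  rw [← piExpect_comp_embedding hq e]
  congr 1
  funext x
  rw [← he, finsetMax_map]
  rfl

lemma hasDerivAt_piExpect_finsetMax {p : ℝ → X → ℝ} {p' : X → ℝ} {θ : ℝ}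
    (hsum : ∀ t, ∑ v, p t v = 1) (hp : ∀ v, HasDerivAt (fun t => p t v) (p' v) θ)
    (hpθ : ∀ v, p θ v ≠ 0) (g : X → ℝ) {k : ℕ} (I : Finset ι) (hI : I.card = k) :
    HasDerivAt (fun t => piExpect (p t) fun y : Fin k → X => finsetMax univ fun b => g (y b))
      (∑ i ∈ I, piExpect (p θ) fun x =>
        (finsetMax I (fun j => g (x j)) - finsetMax (I.erase i) (fun j => g (x j))) *
          (p' (x i) / p θ (x i))) θ := by
  have hp' := sum_eq_zero_of_hasDerivAt_of_sum_eq_one hsum hp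
  have hmax := hasDerivAt_piExpect_of_dependsOn hp hpθ hp' (dependsOn_finsetMax g I)
  simp only [piExpect_finsetMax_of_card_eq (hsum _) g I hI] at hmax
  refine hmax.congr_deriv (sum_congr rfl fun i _ => ?_)
  exact (piExpect_sub_mul_score hpθ hp' i _ ((dependsOn_finsetMax g _).mono fun j hj =>
    ne_of_mem_erase hj)).symm

end PiExpect

theorem unbiased_loo_minus_one_maxgk_gradient_estimator_general {X : Type*} [Fintype X]
    (p : ℝ → X → ℝ)
    (hpos : ∀ θ x, 0 < p θ x)
    (hsum : ∀ θ, ∑ x, p θ x = 1)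
    (hdiff : ∀ x, Differentiable ℝ fun θ => p θ x)
    (g : X → ℝ)
    (n k : ℕ) (hkn : k ≤ n) (θ : ℝ) :
    ∑ x : Fin n → X, (∏ i, p θ (x i)) *
        ∑ i, ((1 / (n.choose k : ℝ)) *
            ∑ I ∈ (Finset.powersetCard k (Finset.univ : Finset (Fin n))).filter
                (fun I => i ∈ I),
              (finsetMax I (fun j => g (x j)) - finsetMax (I.erase i) (fun b => g (x b)))) *
          (deriv (fun t => p t (x i)) θ / p θ (x i))
      = deriv (fun t => ∑ y : Fin k → X,
          (∏ i, p t (y i)) * finsetMax (Finset.univ : Finset (Fin k)) (fun i => g (y i))) θ := by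
  have hp v : HasDerivAt (fun t => p t v) (deriv (fun t => p t v) θ) θ := (hdiff v θ).hasDerivAt
  have hpθ v : p θ v ≠ 0 := (hpos θ v).ne'
  have hC : (n.choose k : ℝ) ≠ 0 := Nat.cast_ne_zero.2 (Nat.choose_pos hkn).ne'
  have hterm I (hI : I ∈ powersetCard k (univ : Finset (Fin n))) :=
    (hasDerivAt_piExpect_finsetMax hsum hp hpθ g I (mem_powersetCard.1 hI).2).deriv
  calc _ = 1 / (n.choose k : ℝ) * ∑ I ∈ powersetCard k (univ : Finset (Fin n)),
        deriv (fun t => piExpect (p t) fun y : Fin k → X => finsetMax univ fun b => g (y b)) θ := by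
        rw [sum_congr rfl hterm]
        exact piExpect_sum_mul_sum_filter_mem _ _ _ _ _
    _ = _ := by
        rw [sum_const, card_powersetCard, card_univ, Fintype.card_fin, nsmul_eq_mul]
        field_simp
        rfl

/-- The estimator ∑_i s_i^{loo−1}(x) ∇_θ log p(xᵢ|θ), with
s_i^{loo−1}(x) = (1/C(n,k)) ∑_{|I| = k, i ∈ I} (max_{j∈I} g(x_j) − max_{b∈I∖{i}} g(x_b)),
is an unbiased estimator of the gradient of
maxg@k(θ) = ∑_{y : Fin k → X} (∏ᵢ p(θ, yᵢ)) · max_{1≤i≤k} g(yᵢ), for 2 ≤ k ≤ n. -/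
theorem unbiased_loo_minus_one_maxgk_gradient_estimator {X : Type*} [Fintype X] [Nonempty X]
    (p : ℝ → X → ℝ)
    (hpos : ∀ θ x, 0 < p θ x)
    (hsum : ∀ θ, ∑ x, p θ x = 1)
    (hdiff : ∀ x, Differentiable ℝ fun θ => p θ x)
    (g : X → ℝ)
    (n k : ℕ) (hk : 2 ≤ k) (hkn : k ≤ n) (θ : ℝ) :
    ∑ x : Fin n → X, (∏ i, p θ (x i)) *
        ∑ i, ((1 / (n.choose k : ℝ)) *
            ∑ I ∈ (Finset.powersetCard k (Finset.univ : Finset (Fin n))).filter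
                (fun I => i ∈ I),
              (finsetMax I (fun j => g (x j)) - finsetMax (I.erase i) (fun b => g (x b)))) *
          (deriv (fun t => p t (x i)) θ / p θ (x i))
      = deriv (fun t => ∑ y : Fin k → X,
          (∏ i, p t (y i)) * finsetMax (Finset.univ : Finset (Fin k)) (fun i => g (y i))) θ :=
  unbiased_loo_minus_one_maxgk_gradient_estimator_general p hpos hsum hdiff g n k hkn θ
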